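/- If α_1, ..., α_k are linearly independent roots of SL(n,C), then they can be extended to a Z-basis of the root lattice Q(R) consisting entirely of roots. -/

import Mathlib

open Finset Pointwise

/-- Coercion of an integer vector to a real vector. -/
def coeZ {n : ℕ} (v : Fin n → ℤ) : Fin n → ℝ := fun i => (v i : ℝ)

/-- The root `e_i - e_j` of `SL(n, ℂ)`, as an integer vector. -/
def rootZ (n : ℕ) (i j : Fin n) : Fin n → ℤ :=
  fun t => (if t = i then 1 else 0) - (if t = j then 1 else 0)

/-- The root `e_i - e_j` as a real vector. -/
def rootR (n : ℕ) (i j : Fin n) : Fin n → ℝ :=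
  fun t => (if t = i then 1 else 0) - (if t = j then 1 else 0)

/-- A vector is a root of `SL(n, ℂ)`. -/
def IsRootVec {n : ℕ} (v : Fin n → ℤ) : Prop :=
  ∃ i j : Fin n, i ≠ j ∧ v = rootZ n i j

/-- `E` is an edge (a one-dimensional face) of the set `P`. -/
def IsEdge {n : ℕ} (P E : Set (Fin n → ℝ)) : Prop :=
  IsExtreme ℝ P E ∧ Module.finrank ℝ (affineSpan ℝ E).direction = 1

/-- The edge `E` is parallel to the root `e_i - e_j` for some `i ≠ j`. -/
def EdgeParallelRoot {n : ℕ} (E : Set (Fin n → ℝ)) : Prop :=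
  ∃ i j : Fin n, i ≠ j ∧ ∀ x ∈ E, ∀ y ∈ E, ∃ c : ℝ, x - y = c • rootR n i j

/-- A finite subset of the root lattice of `SL(n, ℂ)` is root-saturated if every
edge of its convex hull is parallel to a root, and it equals the intersection of
its convex hull with the root lattice. -/
def RootSaturated {n : ℕ} (A : Finset (Fin n → ℤ)) : Prop :=
  (∀ v ∈ A, ∑ i, v i = 0) ∧
  (∀ E : Set (Fin n → ℝ),
      IsEdge (convexHull ℝ (coeZ '' (A : Set (Fin n → ℤ)))) E → EdgeParallelRoot E) ∧
  (∀ v : Fin n → ℤ, ∑ i, v i = 0 →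
      coeZ v ∈ convexHull ℝ (coeZ '' (A : Set (Fin n → ℤ))) → v ∈ A)

/-- The indicator vector (in `ℤ^n`) of a subset `S ⊆ {1, …, n}`. -/
def indZ {n : ℕ} (S : Finset (Fin n)) : Fin n → ℤ := fun i => if i ∈ S then 1 else 0

/-- The indicator vector (in `ℝ^n`) of a subset `S ⊆ {1, …, n}`. -/
def indR {n : ℕ} (S : Finset (Fin n)) : Fin n → ℝ := fun i => if i ∈ S then 1 else 0

/-- `B` is the collection of bases of a matroid on `{1, …, n}`: it is nonempty and
satisfies the basis exchange axiom. -/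
def IsMatroidBases {n : ℕ} (B : Finset (Finset (Fin n))) : Prop :=
  B.Nonempty ∧
  ∀ B₁ ∈ B, ∀ B₂ ∈ B, ∀ x ∈ B₁ \ B₂, ∃ y ∈ B₂ \ B₁, insert y (B₁.erase x) ∈ B

/-- Coercion to ℚ as a ℤ-linear map. -/
def coeQlin {n : ℕ} : (Fin n → ℤ) →ₗ[ℤ] (Fin n → ℚ) where
  toFun v := fun i => (v i : ℚ)
  map_add' a b := by funext i; simp
  map_smul' c a := by funext i; simp

lemma coeQlin_injective {n : ℕ} : Function.Injective (coeQlin (n := n)) := by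
  intro a b h
  funext i
  have := congrFun h i
  simp only [coeQlin, LinearMap.coe_mk, AddHom.coe_mk] at this
  exact_mod_cast this

lemma rootZ_sum {n : ℕ} (i j : Fin n) : ∑ t, rootZ n i j t = 0 := by
  simp [rootZ, Finset.sum_sub_distrib]

lemma rootZ_ne_zero_iff {n : ℕ} {i j : Fin n} (hij : i ≠ j) (t : Fin n) :
    rootZ n i j t ≠ 0 ↔ t = i ∨ t = j := by
  by_cases h1 : t = i <;> by_cases h2 : t = j <;> simp_all [rootZ]

lemma rootZ_support_card {n : ℕ} {i j : Fin n} (hij : i ≠ j) :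
    (univ.filter fun t => rootZ n i j t ≠ 0).card = 2 := by
  have : (univ.filter fun t => rootZ n i j t ≠ 0) = {i, j} := by
    ext t
    simp [rootZ_ne_zero_iff hij]
  rw [this]
  rw [Finset.card_insert_of_notMem (by simp [hij]), Finset.card_singleton]

lemma coeQlin_root_sum {n : ℕ} {v : Fin n → ℤ} (h : IsRootVec v) :
    ∑ i, (coeQlin v) i = 0 := by
  obtain ⟨i, j, hij, rfl⟩ := h
  have : ∑ t, ((rootZ n i j t : ℚ)) = ((∑ t, rootZ n i j t : ℤ) : ℚ) := by push_cast; rfl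
  simpa [coeQlin, rootZ_sum i j] using this

lemma exists_leaf {n m : ℕ} (γ : Fin (m + 1) → (Fin n → ℤ))
    (hroot : ∀ t, IsRootVec (γ t))
    (hindep : LinearIndependent ℚ (fun t => coeQlin (γ t))) :
    ∃ s i, γ s i ≠ 0 ∧ ∀ t, t ≠ s → γ t i = 0 := by
  classical
  set deg : Fin n → ℕ := fun i => (univ.filter fun t => γ t i ≠ 0).card with hdeg
  have htotal : ∑ i, deg i = 2 * (m + 1) := by
    have h1 : ∀ i, deg i = ∑ t : Fin (m + 1), if γ t i ≠ 0 then 1 else 0 := by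
      intro i; rw [hdeg]; simp [Finset.card_filter]
    have h2 : ∀ t : Fin (m + 1), (∑ i, if γ t i ≠ 0 then 1 else 0) = 2 := by
      intro t
      obtain ⟨i, j, hij, hr⟩ := hroot t
      rw [hr]
      rw [← Finset.card_filter]
      exact rootZ_support_card hij
    calc ∑ i, deg i = ∑ i, ∑ t : Fin (m+1), if γ t i ≠ 0 then 1 else 0 := by
            exact Finset.sum_congr rfl (fun i _ => h1 i)
      _ = ∑ t : Fin (m+1), ∑ i, if γ t i ≠ 0 then 1 else 0 := Finset.sum_comm
      _ = ∑ _t : Fin (m+1), 2 := Finset.sum_congr rfl (fun t _ => h2 t)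
      _ = 2 * (m+1) := by simp [mul_comm]
  set V : Finset (Fin n) := univ.filter (fun i => ∃ t, γ t i ≠ 0) with hV
  -- pick i₀ ∈ V
  obtain ⟨i₁, j₁, hij₁, hr₁⟩ := hroot 0
  have hγ0 : γ 0 i₁ ≠ 0 := by
    rw [hr₁]; rw [rootZ_ne_zero_iff hij₁]; left; rfl
  have hi₀ : i₁ ∈ V := by rw [hV]; simp; exact ⟨0, hγ0⟩
  set i₀ := i₁
  -- restricted family is independent
  set V' := V.erase i₀ with hV'
  set ρ : (Fin n → ℚ) →ₗ[ℚ] ({x // x ∈ V'} → ℚ) :=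
    LinearMap.funLeft ℚ ℚ (fun (x : {x // x ∈ V'}) => (x : Fin n)) with hρ
  have hind' : LinearIndependent ℚ (fun t => ρ (coeQlin (γ t))) := by
    rw [Fintype.linearIndependent_iff]
    intro c hc
    set w : Fin n → ℚ := ∑ t, c t • coeQlin (γ t) with hw
    have hρw : ρ w = 0 := by
      rw [hw, map_sum]
      simpa using hc
    have hw' : ∀ j, j ≠ i₀ → w j = 0 := by
      intro j hj
      by_cases hjV : j ∈ V
      · have hjV' : j ∈ V' := Finset.mem_erase.mpr ⟨hj, hjV⟩
        have := congrFun hρw ⟨j, hjV'⟩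
        simpa [hρ, LinearMap.funLeft] using this
      · have hz : ∀ t, γ t j = 0 := by
          intro t
          by_contra hne
          exact hjV (by rw [hV]; simp; exact ⟨t, hne⟩)
        rw [hw]
        simp only [Finset.sum_apply, Pi.smul_apply]
        refine Finset.sum_eq_zero fun t _ => ?_
        simp [coeQlin, hz t]
    have hwsum : ∑ j, w j = 0 := by
      rw [hw]
      simp only [Finset.sum_apply, Pi.smul_apply, smul_eq_mul]
      rw [Finset.sum_comm]
      refine Finset.sum_eq_zero fun t _ => ?_
      rw [← Finset.mul_sum, coeQlin_root_sum (hroot t), mul_zero]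
    have hwi₀ : w i₀ = 0 := by
      have h5 := Finset.sum_eq_single (s := univ) (f := fun j => w j) i₀
        (fun b _ hb => hw' b hb) (by simp)
      calc w i₀ = ∑ j, w j := by simpa using h5.symm
        _ = 0 := hwsum
    have hw0 : w = 0 := by
      funext j
      by_cases hj : j = i₀
      · rw [hj]; exact hwi₀
      · exact hw' j hj
    rw [Fintype.linearIndependent_iff] at hindep
    exact hindep c (by rw [← hw, hw0])
  -- cardinality bound
  have hcard : m + 1 ≤ V'.card := by
    have h1 := hind'.fintype_card_le_finrank
    rw [Module.finrank_fintype_fun_eq_card] at h1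
    simpa [Fintype.card_coe] using h1
  have hVcard : m + 2 ≤ V.card := by
    have h3 : V'.card = V.card - 1 := by rw [hV']; exact Finset.card_erase_of_mem hi₀
    have h2 : 1 ≤ V.card := Finset.card_pos.mpr ⟨i₀, hi₀⟩
    omega
  -- find a degree-one vertex
  by_contra hno
  push_neg at hno
  have hdeg2 : ∀ i ∈ V, 2 ≤ deg i := by
    intro i hi
    rw [hV] at hi
    simp only [Finset.mem_filter, Finset.mem_univ, true_and] at hi
    obtain ⟨t, ht⟩ := hi
    have h1 : 1 ≤ deg i := Finset.card_pos.mpr ⟨t, by simp [ht]⟩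
    rcases Nat.lt_or_ge (deg i) 2 with h | h
    · exfalso
      have h' : deg i = 1 := le_antisymm (by omega) h1
      obtain ⟨s, hs⟩ := Finset.card_eq_one.mp h'
      have hsmem : s ∈ univ.filter fun t => γ t i ≠ 0 := hs ▸ Finset.mem_singleton_self s
      have hγs : γ s i ≠ 0 := (Finset.mem_filter.mp hsmem).2
      obtain ⟨t, hts, htne⟩ := hno s i hγs
      have : t ∈ ({s} : Finset _) := hs ▸ (Finset.mem_filter.mpr ⟨Finset.mem_univ t, htne⟩)
      exact hts (Finset.mem_singleton.mp this)
    · exact h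
  have : 2 * (m + 2) ≤ ∑ i, deg i := by
    calc 2 * (m + 2) ≤ 2 * V.card := by omega
      _ = ∑ _i ∈ V, 2 := by simp [mul_comm]
      _ ≤ ∑ i ∈ V, deg i := Finset.sum_le_sum hdeg2
      _ ≤ ∑ i, deg i := Finset.sum_le_sum_of_subset (Finset.subset_univ V)
  omega

lemma sat {n : ℕ} : ∀ (m : ℕ) (γ : Fin m → (Fin n → ℤ)), (∀ t, IsRootVec (γ t)) →
    LinearIndependent ℚ (fun t => coeQlin (γ t)) →
    ∀ v : Fin n → ℤ, coeQlin v ∈ Submodule.span ℚ (Set.range fun t => coeQlin (γ t)) →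
    v ∈ Submodule.span ℤ (Set.range γ) := by
  intro m
  induction m with
  | zero =>
    intro γ _ _ v hv
    have hr : (Set.range fun t : Fin 0 => coeQlin (γ t)) = ∅ := Set.range_eq_empty _
    rw [hr, Submodule.span_empty, Submodule.mem_bot] at hv
    have hv0 : v = 0 := coeQlin_injective (by rw [hv, map_zero])
    rw [hv0]
    exact Submodule.zero_mem _
  | succ m ih =>
    intro γ hroot hindep v hv
    obtain ⟨s, i, hsi, hzero⟩ := exists_leaf γ hroot hindep
    set ε : ℤ := γ s i with hε
    have hε1 : ε = 1 ∨ ε = -1 := by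
      obtain ⟨a, b, hab, hr⟩ := hroot s
      have h2 : γ s i ≠ 0 := hsi
      rw [hr] at h2
      rw [hε, hr]
      by_cases ha : i = a <;> by_cases hb : i = b <;> simp_all [rootZ]
    set γ' : Fin m → Fin n → ℤ := fun t => γ (s.succAbove t) with hγ'
    have hrange : (Set.range fun t => coeQlin (γ t)) =
        insert (coeQlin (γ s)) (Set.range fun t => coeQlin (γ' t)) := by
      ext x
      constructor
      · rintro ⟨t, rfl⟩
        rcases eq_or_ne t s with rfl | h
        · exact Set.mem_insert _ _
        · obtain ⟨u, hu⟩ := Fin.exists_succAbove_eq h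
          refine Set.mem_insert_of_mem _ ⟨u, ?_⟩
          show coeQlin (γ (s.succAbove u)) = coeQlin (γ t)
          rw [hu]
      · rintro (h | ⟨u, rfl⟩)
        · exact ⟨s, h.symm⟩
        · exact ⟨s.succAbove u, rfl⟩
    rw [hrange] at hv
    obtain ⟨c, z, hz, hvz⟩ := Submodule.mem_span_insert.mp hv
    have hz_i : z i = 0 := by
      have hle : Submodule.span ℚ (Set.range fun t => coeQlin (γ' t)) ≤
          LinearMap.ker (LinearMap.proj (R := ℚ) (φ := fun _ : Fin n => ℚ) i) := by
        rw [Submodule.span_le]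
        rintro x ⟨u, rfl⟩
        have : γ' u i = 0 := hzero _ (Fin.succAbove_ne s u)
        simp [LinearMap.mem_ker, coeQlin, this]
      have := hle hz
      simpa using this
    have hvi : (v i : ℚ) = c * (ε : ℚ) := by
      have := congrFun hvz i
      simp only [coeQlin, LinearMap.coe_mk, AddHom.coe_mk, Pi.add_apply, Pi.smul_apply,
        smul_eq_mul] at this
      rw [hz_i, add_zero] at this
      exact this
    have hc : c = ((ε * v i : ℤ) : ℚ) := by
      rcases hε1 with h | h <;> rw [h] at hvi ⊢ <;> push_cast <;> push_cast at hvi <;> linarith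
    set v' : Fin n → ℤ := v - (ε * v i) • γ s with hv'
    have hcoev' : coeQlin v' = z := by
      rw [hv', map_sub, map_smul, hvz, hc]
      rw [← Int.cast_smul_eq_zsmul ℚ (ε * v i) (coeQlin (γ s))]
      abel
    have hmem' : v' ∈ Submodule.span ℤ (Set.range γ') := by
      refine ih γ' (fun t => hroot _) ?_ v' (by rw [hcoev']; exact hz)
      exact hindep.comp s.succAbove (Fin.succAbove_right_injective)
    have hsub : Submodule.span ℤ (Set.range γ') ≤ Submodule.span ℤ (Set.range γ) := by
      apply Submodule.span_mono
      rintro x ⟨u, rfl⟩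
      exact ⟨s.succAbove u, rfl⟩
    have hγs : γ s ∈ Submodule.span ℤ (Set.range γ) := Submodule.subset_span ⟨s, rfl⟩
    have : v = v' + (ε * v i) • γ s := by rw [hv']; abel
    rw [this]
    exact Submodule.add_mem _ (hsub hmem') (Submodule.smul_mem _ _ hγs)

/-- The sum-of-coordinates functional over ℚ. -/
noncomputable def sumQ (n : ℕ) : (Fin n → ℚ) →ₗ[ℚ] ℚ := ∑ i, LinearMap.proj i

lemma sumQ_apply {n : ℕ} (v : Fin n → ℚ) : sumQ n v = ∑ i, v i := by
  simp [sumQ]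

lemma mem_ker_sumQ {n : ℕ} (v : Fin n → ℚ) :
    v ∈ LinearMap.ker (sumQ n) ↔ ∑ i, v i = 0 := by
  rw [LinearMap.mem_ker, sumQ_apply]

lemma span_rootsQ {n : ℕ} :
    Submodule.span ℚ (coeQlin '' {v : Fin n → ℤ | IsRootVec v}) = LinearMap.ker (sumQ n) := by
  apply le_antisymm
  · rw [Submodule.span_le]
    rintro x ⟨v, hv, rfl⟩
    rw [SetLike.mem_coe, mem_ker_sumQ]
    exact coeQlin_root_sum hv
  · intro v hv
    rw [mem_ker_sumQ] at hv
    rcases Nat.eq_zero_or_pos n with hn | hn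
    · have : v = 0 := by subst hn; funext i; exact absurd i.2 (by omega)
      rw [this]; exact Submodule.zero_mem _
    · set i₀ : Fin n := ⟨0, hn⟩ with hi₀
      have hid : v = ∑ i, v i • coeQlin (rootZ n i i₀) := by
        funext a
        simp only [Finset.sum_apply, Pi.smul_apply, smul_eq_mul, coeQlin, rootZ,
          LinearMap.coe_mk, AddHom.coe_mk]
        push_cast
        simp only [mul_sub, Finset.sum_sub_distrib, mul_ite, mul_one, mul_zero]
        rw [Finset.sum_ite_eq, Finset.sum_ite_irrel]
        simp [hv]
      rw [hid]
      refine Submodule.sum_mem _ fun i _ => ?_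
      rcases eq_or_ne i i₀ with heq | hne
      · have : rootZ n i i₀ = 0 := by funext t; simp [rootZ, heq]
        rw [this, map_zero, smul_zero]
        exact Submodule.zero_mem _
      · exact Submodule.smul_mem _ _ (Submodule.subset_span ⟨rootZ n i i₀, ⟨i, i₀, hne, rfl⟩, rfl⟩)

lemma finrank_ker_sumQ {n : ℕ} :
    Module.finrank ℚ (LinearMap.ker (sumQ n)) = n - 1 := by
  rcases Nat.eq_zero_or_pos n with hn | hn
  · subst hn
    have h1 : Module.finrank ℚ (LinearMap.ker (sumQ 0)) ≤ Module.finrank ℚ (Fin 0 → ℚ) :=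
      Submodule.finrank_le _
    rw [Module.finrank_fintype_fun_eq_card] at h1
    simpa using h1
  · have hsurj : Function.Surjective (sumQ n) := by
      intro c
      refine ⟨fun j => if j = ⟨0, hn⟩ then c else 0, ?_⟩
      rw [sumQ_apply]
      simp
    have h2 := LinearMap.finrank_range_add_finrank_ker (sumQ n)
    rw [LinearMap.range_eq_top.mpr hsurj] at h2
    rw [Module.finrank_fintype_fun_eq_card, Fintype.card_fin] at h2
    simp only [finrank_top] at h2
    have : Module.finrank ℚ ℚ = 1 := Module.finrank_self ℚ
    omega

noncomputable def sumZ (n : ℕ) : (Fin n → ℤ) →ₗ[ℤ] ℤ := ∑ i, LinearMap.proj i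

lemma sumZ_apply {n : ℕ} (v : Fin n → ℤ) : sumZ n v = ∑ i, v i := by
  simp [sumZ]


/-- linearly independent roots of `SL(n, ℂ)` extend to a `ℤ`-basis of
the root lattice consisting entirely of roots. -/
theorem independent_roots_extend_to_root_basis (n k : ℕ)
    (α : Fin k → (Fin n → ℤ))
    (hroot : ∀ t, IsRootVec (α t))
    (hindep : LinearIndependent ℚ (fun t => (fun i => (α t i : ℚ)))) :
    ∃ β : Fin (n - 1) → (Fin n → ℤ),
      (∀ t, IsRootVec (β t)) ∧
      Set.range α ⊆ Set.range β ∧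
      LinearIndependent ℤ β ∧
      (Submodule.span ℤ (Set.range β) : Set (Fin n → ℤ)) =
        {v : Fin n → ℤ | ∑ i, v i = 0} := by
  classical
  have hindep' : LinearIndependent ℚ (fun t => coeQlin (α t)) := hindep
  set s : Set (Fin n → ℚ) := Set.range (fun t => coeQlin (α t)) with hs
  set T : Set (Fin n → ℚ) := coeQlin '' {v : Fin n → ℤ | IsRootVec v} with hT
  have hsT : s ⊆ T := by
    rintro x ⟨t, rfl⟩
    exact ⟨α t, hroot t, rfl⟩
  have hs_ind : LinearIndependent ℚ ((↑) : s → (Fin n → ℚ)) := (linearIndepOn_id_range_iff hindep'.injective).mpr hindep'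
  obtain ⟨b, hbT, hsb, hTb, hb_ind⟩ := exists_linearIndepOn_id_extension hs_ind hsT
  replace hb_ind : LinearIndependent ℚ ((↑) : b → (Fin n → ℚ)) := hb_ind
  have hspanT : Submodule.span ℚ T = LinearMap.ker (sumQ n) := span_rootsQ
  have hspanb : Submodule.span ℚ b = LinearMap.ker (sumQ n) := by
    rw [← hspanT]
    exact le_antisymm (Submodule.span_mono hbT) (Submodule.span_le.mpr hTb)
  have hfin : b.Finite := hb_ind.setFinite
  haveI : Fintype b := hfin.fintype
  have hcardb : Fintype.card b = n - 1 := by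
    have h1 := finrank_span_set_eq_card hb_ind
    rw [hspanb, finrank_ker_sumQ] at h1
    rw [← Set.toFinset_card]
    omega
  set e : Fin (n - 1) ≃ b := (Fintype.equivFinOfCardEq hcardb).symm with he
  have hchoose : ∀ x : b, ∃ v : Fin n → ℤ, IsRootVec v ∧ coeQlin v = (x : Fin n → ℚ) := by
    intro x
    obtain ⟨v, hv, hvx⟩ := hbT x.2
    exact ⟨v, hv, hvx⟩
  choose g hg1 hg2 using hchoose
  set β : Fin (n - 1) → (Fin n → ℤ) := fun u => g (e u) with hβ
  have hcoeβ : ∀ u, coeQlin (β u) = ((e u : b) : Fin n → ℚ) := fun u => hg2 (e u)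
  have hrangeβ : (Set.range fun u => coeQlin (β u)) = b := by
    ext x
    constructor
    · rintro ⟨u, rfl⟩
      show coeQlin (β u) ∈ b
      rw [hcoeβ]
      exact (e u).2
    · intro hx
      refine ⟨e.symm ⟨x, hx⟩, ?_⟩
      show coeQlin (β (e.symm ⟨x, hx⟩)) = x
      rw [hcoeβ, e.apply_symm_apply]
  refine ⟨β, fun u => hg1 (e u), ?_, ?_, ?_⟩
  · rintro x ⟨t, rfl⟩
    have hmem : coeQlin (α t) ∈ b := hsb ⟨t, rfl⟩
    refine ⟨e.symm ⟨coeQlin (α t), hmem⟩, ?_⟩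
    apply coeQlin_injective
    rw [hcoeβ, e.apply_symm_apply]
  · -- ℤ-linear independence
    have h1 : LinearIndependent ℚ (fun u => coeQlin (β u)) := by
      have : (fun u => coeQlin (β u)) = ((↑) : b → (Fin n → ℚ)) ∘ e := by
        funext u; exact hcoeβ u
      rw [this]
      exact hb_ind.comp e e.injective
    have h2 : LinearIndependent ℤ (fun u => coeQlin (β u)) := by
      refine h1.restrict_scalars ?_
      intro a b hab
      simp only [zsmul_eq_mul, mul_one] at hab
      exact_mod_cast hab
    exact LinearIndependent.of_comp coeQlin h2
  · ext v
    simp only [SetLike.mem_coe, Set.mem_setOf_eq]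
    constructor
    · intro hv
      have hle : Submodule.span ℤ (Set.range β) ≤ LinearMap.ker (sumZ n) := by
        rw [Submodule.span_le]
        rintro x ⟨u, rfl⟩
        rw [SetLike.mem_coe, LinearMap.mem_ker, sumZ_apply]
        obtain ⟨i, j, hij, hr⟩ := hg1 (e u)
        have hβu : β u = rootZ n i j := hr
        rw [hβu]
        exact rootZ_sum i j
      have := hle hv
      rwa [LinearMap.mem_ker, sumZ_apply] at this
    · intro hv
      have hmemQ : coeQlin v ∈ Submodule.span ℚ (Set.range fun u => coeQlin (β u)) := by
        rw [hrangeβ, hspanb, mem_ker_sumQ]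
        have : ∑ i, (coeQlin v) i = ((∑ i, v i : ℤ) : ℚ) := by push_cast; rfl
        rw [this, hv, Int.cast_zero]
      exact sat (n - 1) β (fun u => hg1 (e u)) (by
        have : (fun u => coeQlin (β u)) = ((↑) : b → (Fin n → ℚ)) ∘ e := by
          funext u; exact hcoeβ u
        rw [this]
        exact hb_ind.comp e e.injective) v hmemQ
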